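/- arXiv:2012.13034 — 6 statements merged into one kernel-verified Lean document; each statement's English description precedes it below -/
import Mathlib

section
/- Let F: B(p₀,r) ⊂ ℝ^d → ℝ^d be a C² map. Suppose there exist 0 < R₁, R₂ < ∞ such that the Jacobian DF(p₀) is invertible with ‖(DF(p₀))⁻¹‖ ≤ R₁⁻¹, and all second-order partial derivatives of F satisfy |∂^α F(p)| ≤ R₂⁻¹ for every p ∈ B(p₀,r) and |α| = 2. Then there exists a constant c_d > 0 depending only on d such that F is injective on any ball B(p₀, r₀) with 0 < r₀ ≤ min(c_d R₁ R₂, r). -/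
/-!
The second derivative of `F` is bounded in operator norm by `C_d / R₂`, where `C_d` only depends
on the dimension. By the mean value inequality, on a ball of radius `r₀ ≤ R₁ R₂ / (2 C_d)` the
derivative `DF` stays within `R₁ / 2` of `L = DF(p₀)`, so `F - L` is `R₁ / 2`-Lipschitz there.
As `‖L⁻¹‖ ≤ R₁⁻¹`, the map `F` approximates the invertible map `L` well enough to be injective.
-/

open Metric Set

theorem EuclideanSpace.norm_le_sqrt_card_mul {ι : Type*} [Fintype ι] {x : EuclideanSpace ℝ ι}
    {M : ℝ} (hM : 0 ≤ M) (hx : ∀ i, |x i| ≤ M) : ‖x‖ ≤ √(Fintype.card ι) * M := by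
  refine ((EuclideanSpace.basisFun ι ℝ).norm_le_card_mul_iSup_norm_inner x).trans ?_
  gcongr
  exact Real.iSup_le (fun i => by simpa using hx i) hM

theorem Module.Basis.exists_opNorm_le_of_norm_apply_apply_le {𝕜 E E' F ι ι' : Type*}
    [NontriviallyNormedField 𝕜] [CompleteSpace 𝕜] [NormedAddCommGroup E] [NormedSpace 𝕜 E]
    [NormedAddCommGroup E'] [NormedSpace 𝕜 E'] [NormedAddCommGroup F] [NormedSpace 𝕜 F]
    [Finite ι] [Finite ι'] (b : Basis ι 𝕜 E) (b' : Basis ι' 𝕜 E') :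
    ∃ C > (0 : ℝ), ∀ {T : E →L[𝕜] E' →L[𝕜] F} {M : ℝ}, 0 ≤ M →
      (∀ i j, ‖T (b i) (b' j)‖ ≤ M) → ‖T‖ ≤ C * M := by
  obtain ⟨C, hC, hb⟩ := b.exists_opNorm_le (F := E' →L[𝕜] F)
  obtain ⟨C', hC', hb'⟩ := b'.exists_opNorm_le (F := F)
  refine ⟨C * C', by positivity, fun hM hT => ?_⟩
  rw [mul_assoc]
  exact hb (by positivity) fun i => hb' hM (hT i)

theorem EuclideanSpace.exists_opNorm_le_of_abs_apply_single_single_le (ι ι' κ : Type*)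
    [Fintype ι] [Fintype ι'] [Fintype κ] [DecidableEq ι] [DecidableEq ι'] :
    ∃ C > (0 : ℝ), ∀ {T : EuclideanSpace ℝ ι →L[ℝ] EuclideanSpace ℝ ι' →L[ℝ] EuclideanSpace ℝ κ}
      {M : ℝ}, 0 ≤ M → (∀ i j k, |T (single i 1) (single j 1) k| ≤ M) → ‖T‖ ≤ C * M := by
  obtain ⟨C, hC, hb⟩ := (basisFun ι ℝ).toBasis.exists_opNorm_le_of_norm_apply_apply_le
    (basisFun ι' ℝ).toBasis (F := EuclideanSpace ℝ κ)
  refine ⟨C * (√(Fintype.card κ) + 1), by positivity, fun {T M} hM hT => ?_⟩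
  have hentry : ∀ i j, ‖T (single i 1) (single j 1)‖ ≤ (√(Fintype.card κ) + 1) * M :=
    fun i j => (norm_le_sqrt_card_mul hM (hT i j)).trans (by gcongr; linarith)
  rw [mul_assoc]
  exact hb (by positivity) fun i j => by simpa using hentry i j

section

variable {E F : Type*} [NormedAddCommGroup E] [NormedSpace ℝ E]
  [NormedAddCommGroup F] [NormedSpace ℝ F]

theorem approximatesLinearOn_ball_of_norm_fderiv_fderiv_le {f : E → F} {x₀ : E} {r K : ℝ}
    {c : NNReal} (hf : ContDiffOn ℝ 2 f (ball x₀ r))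
    (hK : ∀ x ∈ ball x₀ r, ‖fderiv ℝ (fderiv ℝ f) x‖ ≤ K) (hc : K * r ≤ c) :
    ApproximatesLinearOn f (fderiv ℝ f x₀) (ball x₀ r) c := by
  have hf2 : ∀ x ∈ ball x₀ r, ContDiffAt ℝ 2 f x :=
    fun x hx => hf.contDiffAt (isOpen_ball.mem_nhds hx)
  have hdf : ∀ x ∈ ball x₀ r, DifferentiableAt ℝ f x :=
    fun x hx => (hf2 x hx).differentiableAt two_ne_zero
  have hdf' : ∀ x ∈ ball x₀ r, DifferentiableAt ℝ (fderiv ℝ f) x :=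
    fun x hx => ((hf2 x hx).fderiv_right one_add_one_eq_two.le).differentiableAt one_ne_zero
  have hderiv : ∀ x ∈ ball x₀ r, ‖fderiv ℝ f x - fderiv ℝ f x₀‖ ≤ c := by
    intro x hx
    have hx₀ : x₀ ∈ ball x₀ r := mem_ball_self (pos_of_mem_ball hx)
    have hK₀ : 0 ≤ K := (norm_nonneg (fderiv ℝ (fderiv ℝ f) x₀)).trans (hK x₀ hx₀)
    calc ‖fderiv ℝ f x - fderiv ℝ f x₀‖ ≤ K * ‖x - x₀‖ :=
          (convex_ball x₀ r).norm_image_sub_le_of_norm_fderiv_le hdf' hK hx₀ hx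
      _ ≤ K * r := by gcongr; exact (mem_ball_iff_norm.mp hx).le
      _ ≤ c := hc
  intro x hx y hy
  exact (convex_ball x₀ r).norm_image_sub_le_of_norm_fderiv_le' hdf hderiv hy hx

theorem injOn_ball_of_norm_fderiv_fderiv_le {f : E → F} {L : E ≃L[ℝ] F} {x₀ : E} {r K : ℝ}
    (hf : ContDiffOn ℝ 2 f (ball x₀ r)) (hL : (L : E →L[ℝ] F) = fderiv ℝ f x₀)
    (hK : ∀ x ∈ ball x₀ r, ‖fderiv ℝ (fderiv ℝ f) x‖ ≤ K)
    (hKr : K * r * ‖(L.symm : F →L[ℝ] E)‖ < 1) : InjOn f (ball x₀ r) := by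
  have happrox := approximatesLinearOn_ball_of_norm_fderiv_fderiv_le hf hK (K * r).le_coe_toNNReal
  rw [← hL] at happrox
  refine happrox.injOn ?_
  refine L.subsingleton_or_norm_symm_pos.imp id fun hN => ?_
  have hlt : K * r < ‖(L.symm : F →L[ℝ] E)‖⁻¹ := by
    rw [← mul_one ‖_‖⁻¹, lt_inv_mul_iff₀' hN]
    exact hKr
  rw [← Real.toNNReal_coe (r := ‖(L.symm : F →L[ℝ] E)‖₊⁻¹),
    Real.toNNReal_lt_toNNReal_iff (by simpa using hN)]
  simpa using hlt

end

theorem stmt_0 (d : ℕ) :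
    ∃ c : ℝ, 0 < c ∧
      ∀ (F : EuclideanSpace ℝ (Fin d) → EuclideanSpace ℝ (Fin d))
        (p₀ : EuclideanSpace ℝ (Fin d)) (r R₁ R₂ : ℝ),
        0 < r → 0 < R₁ → 0 < R₂ →
        ContDiffOn ℝ 2 F (ball p₀ r) →
        (∃ L : EuclideanSpace ℝ (Fin d) ≃L[ℝ] EuclideanSpace ℝ (Fin d),
          (L : EuclideanSpace ℝ (Fin d) →L[ℝ] EuclideanSpace ℝ (Fin d)) = fderiv ℝ F p₀ ∧
          ‖(L.symm : EuclideanSpace ℝ (Fin d) →L[ℝ] EuclideanSpace ℝ (Fin d))‖ ≤ R₁⁻¹) →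
        (∀ p ∈ ball p₀ r, ∀ i j k : Fin d,
          |iteratedFDeriv ℝ 2 F p
            ![EuclideanSpace.single i 1, EuclideanSpace.single j 1] k| ≤ R₂⁻¹) →
        ∀ r₀ : ℝ, 0 < r₀ → r₀ ≤ min (c * R₁ * R₂) r →
          Set.InjOn F (ball p₀ r₀) := by
  obtain ⟨C, hC, hbilin⟩ :=
    EuclideanSpace.exists_opNorm_le_of_abs_apply_single_single_le (Fin d) (Fin d) (Fin d)
  refine ⟨(2 * C)⁻¹, by positivity, ?_⟩
  rintro F p₀ r R₁ R₂ - hR₁ hR₂ hF ⟨L, hL, hLs⟩ hsecond r₀ - hr₀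
  have hsub : ball p₀ r₀ ⊆ ball p₀ r := ball_subset_ball (hr₀.trans (min_le_right _ _))
  refine injOn_ball_of_norm_fderiv_fderiv_le (hF.mono hsub) hL (K := C * R₂⁻¹)
    (fun p hp => hbilin (by positivity) fun i j k => ?_) ?_
  · simpa [iteratedFDeriv_two_apply] using hsecond p (hsub hp) i j k
  · calc C * R₂⁻¹ * r₀ * ‖(L.symm : EuclideanSpace ℝ (Fin d) →L[ℝ] EuclideanSpace ℝ (Fin d))‖
        ≤ C * R₂⁻¹ * ((2 * C)⁻¹ * R₁ * R₂) * R₁⁻¹ := by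
          gcongr
          exact hr₀.trans (min_le_left _ _)
      _ = 1 / 2 := by field_simp
      _ < 1 := by norm_num
end

section
/- Let F: B(p₀,r) ⊂ ℝ^d → ℝ^d be a C² map with ‖(DF(p₀))⁻¹‖ ≤ R₁⁻¹ and |∂^α F(p)| ≤ R₂⁻¹ for all p ∈ B(p₀,r), |α| = 2. Then there is a constant c_d > 0 depending only on d such that for any 0 < r₀ ≤ min(c_d R₁ R₂, r), the image F(B(p₀,r₀)) contains the ball of radius (1/2) r₀ R₁ centered at F(p₀). -/
/-!
The bound on the second derivatives gives `‖D²F‖ ≤ d^{5/2} R₂⁻¹`, so by the mean value inequality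
`‖DF(p) - DF(p₀)‖ ≤ d^{5/2} R₂⁻¹ r₀ ≤ R₁ / 2` on `B(p₀, r₀)`. Thus on this ball `F` approximates
the linear equivalence `DF(p₀)`, whose inverse has norm at most `R₁⁻¹`, with Lipschitz error at
most `R₁ / 2`, and Newton's iteration
(`ApproximatesLinearOn.surjOn_closedBall_of_nonlinearRightInverse`) reaches every point of
`B(F(p₀), r₀ R₁ / 2)`.
-/

open Metric NNReal

/-- Unlike `ContinuousLinearEquiv.toNonlinearRightInverse`, the bound is any `C ≥ ‖L⁻¹‖`, so that
`C⁻¹` is not the junk value `0⁻¹ = 0` when the spaces are trivial. -/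
noncomputable def ContinuousLinearEquiv.toNonlinearRightInverseOfNormSymmLe
    {E F : Type*} [NormedAddCommGroup E] [NormedSpace ℝ E] [NormedAddCommGroup F]
    [NormedSpace ℝ F] (L : E ≃L[ℝ] F) {C : ℝ≥0} (hC : ‖(L.symm : F →L[ℝ] E)‖ ≤ C) :
    (L : E →L[ℝ] F).NonlinearRightInverse where
  toFun := L.symm
  nnnorm := C
  bound' y := ((L.symm : F →L[ℝ] E).le_opNorm y).trans (by gcongr)
  right_inv' := L.apply_symm_apply

section Surjectivity

variable {E F : Type*} [NormedAddCommGroup E] [NormedSpace ℝ E] [NormedAddCommGroup F]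
  [NormedSpace ℝ F]

theorem Convex.approximatesLinearOn_of_norm_fderiv_sub_le {f : E → F} {φ : E →L[ℝ] F}
    {s : Set E} {c : ℝ≥0} (hs : Convex ℝ s) (hf : ∀ x ∈ s, DifferentiableAt ℝ f x)
    (bound : ∀ x ∈ s, ‖fderiv ℝ f x - φ‖ ≤ c) : ApproximatesLinearOn f φ s c :=
  fun _ hx _ hy => hs.norm_image_sub_le_of_norm_fderiv_le' hf bound hy hx

theorem ball_subset_image_ball_of_norm_fderiv_sub_le [CompleteSpace E] {f : E → F} {a : E}
    {ρ R : ℝ} (L : E ≃L[ℝ] F) (hR : 0 < R) (hL : ‖(L.symm : F →L[ℝ] E)‖ ≤ R⁻¹)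
    (hf : ∀ x ∈ ball a ρ, DifferentiableAt ℝ f x)
    (hfL : ∀ x ∈ ball a ρ, ‖fderiv ℝ f x - L‖ ≤ R / 2) :
    ball (f a) (ρ * R / 2) ⊆ f '' ball a ρ := by
  intro y hy
  set ε := 2 * dist y (f a) / R with hε
  have hερ : ε < ρ := by
    rw [hε, div_lt_iff₀ hR]
    linarith [mem_ball.1 hy]
  have hεball : closedBall a ε ⊆ ball a ρ := closedBall_subset_ball hερ
  have happrox : ApproximatesLinearOn f (L : E →L[ℝ] F) (closedBall a ε) (R / 2).toNNReal :=
    (convex_closedBall a ε).approximatesLinearOn_of_norm_fderiv_sub_le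
      (fun x hx => hf x (hεball hx))
      fun x hx => (hfL x (hεball hx)).trans (Real.le_coe_toNNReal _)
  have hy' : y ∈ closedBall (f a) ((R - R / 2) * ε) := by
    rw [mem_closedBall, hε]
    field_simp
    linarith
  have hsurj := happrox.surjOn_closedBall_of_nonlinearRightInverse
    (L.toNonlinearRightInverseOfNormSymmLe (hL.trans (Real.le_coe_toNNReal _))) (by positivity)
    subset_rfl
  simp only [ContinuousLinearEquiv.toNonlinearRightInverseOfNormSymmLe,
    Real.coe_toNNReal _ (inv_pos.2 hR).le, Real.coe_toNNReal _ (half_pos hR).le, inv_inv] at hsurj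
  obtain ⟨x, hx, rfl⟩ := hsurj hy'
  exact ⟨x, hεball hx, rfl⟩

end Surjectivity

section EuclideanBounds

variable {𝕜 ι : Type*} [RCLike 𝕜] [Fintype ι]

theorem EuclideanSpace.norm_le_sqrt_card_mul_of_norm_apply_le (x : EuclideanSpace 𝕜 ι) {C : ℝ}
    (hC : 0 ≤ C) (h : ∀ i, ‖x i‖ ≤ C) : ‖x‖ ≤ √(Fintype.card ι) * C := by
  rw [EuclideanSpace.norm_eq, ← Real.sqrt_sq hC, ← Real.sqrt_mul (Nat.cast_nonneg _)]
  gcongr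
  calc ∑ i, ‖x i‖ ^ 2 ≤ ∑ _i : ι, C ^ 2 := by gcongr with i; exact h i
    _ = Fintype.card ι * C ^ 2 := by simp

theorem ContinuousLinearMap.opNorm_le_card_mul_of_norm_apply_single_le [DecidableEq ι]
    {G : Type*} [SeminormedAddCommGroup G] [NormedSpace 𝕜 G] (T : EuclideanSpace 𝕜 ι →L[𝕜] G)
    {C : ℝ} (hC : 0 ≤ C) (h : ∀ i, ‖T (EuclideanSpace.single i 1)‖ ≤ C) :
    ‖T‖ ≤ Fintype.card ι * C := by
  refine T.opNorm_le_bound (by positivity) fun v => ?_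
  have hv : T v = ∑ i, v i • T (EuclideanSpace.single i 1) := by
    conv_lhs => rw [← (EuclideanSpace.basisFun ι 𝕜).sum_repr v]
    simp [map_sum, map_smul]
  calc ‖T v‖ ≤ ∑ i, ‖v i‖ * ‖T (EuclideanSpace.single i 1)‖ := by
        rw [hv]; exact (norm_sum_le _ _).trans_eq (by simp only [norm_smul])
    _ ≤ ∑ _i : ι, ‖v‖ * C := by
        gcongr with i
        · exact PiLp.norm_apply_le v i
        · exact h i
    _ = Fintype.card ι * C * ‖v‖ := by simp; ring

theorem ContinuousLinearMap.opNorm_le_of_norm_apply_single_single_le [DecidableEq ι]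
    {ι' κ : Type*} [Fintype ι'] [DecidableEq ι'] [Fintype κ]
    (B : EuclideanSpace 𝕜 ι →L[𝕜] EuclideanSpace 𝕜 ι' →L[𝕜] EuclideanSpace 𝕜 κ) {C : ℝ}
    (hC : 0 ≤ C)
    (h : ∀ i j k, ‖B (EuclideanSpace.single i 1) (EuclideanSpace.single j 1) k‖ ≤ C) :
    ‖B‖ ≤ Fintype.card ι * (Fintype.card ι' * (√(Fintype.card κ) * C)) :=
  B.opNorm_le_card_mul_of_norm_apply_single_le (by positivity) fun i =>
    (B _).opNorm_le_card_mul_of_norm_apply_single_le (by positivity) fun j =>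
      EuclideanSpace.norm_le_sqrt_card_mul_of_norm_apply_le _ hC (h i j)

end EuclideanBounds

theorem stmt_1 (d : ℕ) :
    ∃ c : ℝ, 0 < c ∧
      ∀ (F : EuclideanSpace ℝ (Fin d) → EuclideanSpace ℝ (Fin d))
        (p₀ : EuclideanSpace ℝ (Fin d)) (r R₁ R₂ : ℝ),
        0 < r → 0 < R₁ → 0 < R₂ →
        ContDiffOn ℝ 2 F (ball p₀ r) →
        (∃ L : EuclideanSpace ℝ (Fin d) ≃L[ℝ] EuclideanSpace ℝ (Fin d),
          (L : EuclideanSpace ℝ (Fin d) →L[ℝ] EuclideanSpace ℝ (Fin d)) = fderiv ℝ F p₀ ∧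
          ‖(L.symm : EuclideanSpace ℝ (Fin d) →L[ℝ] EuclideanSpace ℝ (Fin d))‖ ≤ R₁⁻¹) →
        (∀ p ∈ ball p₀ r, ∀ i j k : Fin d,
          |iteratedFDeriv ℝ 2 F p
            ![EuclideanSpace.single i 1, EuclideanSpace.single j 1] k| ≤ R₂⁻¹) →
        ∀ r₀ : ℝ, 0 < r₀ → r₀ ≤ min (c * R₁ * R₂) r →
          ball (F p₀) (r₀ * R₁ / 2) ⊆ F '' (ball p₀ r₀) := by
  set K : ℝ := d * (d * √d)
  refine ⟨(2 * (K + 1))⁻¹, by positivity, ?_⟩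
  rintro F p₀ r R₁ R₂ hr hR₁ hR₂ hF ⟨L, hL, hLsymm⟩ hD2 r₀ hr₀ hr₀le
  have hC2 : ∀ x ∈ ball p₀ r, ContDiffAt ℝ 2 F x := fun x hx =>
    hF.contDiffAt (isOpen_ball.mem_nhds hx)
  have hD2F : ∀ x ∈ ball p₀ r, ‖fderiv ℝ (fderiv ℝ F) x‖ ≤ K * R₂⁻¹ := fun x hx => by
    simpa [K, mul_assoc] using
      (fderiv ℝ (fderiv ℝ F) x).opNorm_le_of_norm_apply_single_single_le (by positivity)
        fun i j k => by simpa [iteratedFDeriv_two_apply] using hD2 x hx i j k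
  have hr₀r : ball p₀ r₀ ⊆ ball p₀ r := ball_subset_ball (hr₀le.trans (min_le_right _ _))
  refine ball_subset_image_ball_of_norm_fderiv_sub_le L hR₁ hLsymm
    (fun x hx => (hC2 x (hr₀r hx)).differentiableAt (by norm_num)) fun x hx => ?_
  rw [hL]
  calc ‖fderiv ℝ F x - fderiv ℝ F p₀‖ ≤ K * R₂⁻¹ * ‖x - p₀‖ :=
        (convex_ball p₀ r).norm_image_sub_le_of_norm_fderiv_le
          (fun z hz => ((hC2 z hz).fderiv_right (m := 1) (by norm_num)).differentiableAt
            one_ne_zero) hD2F (mem_ball_self hr) (hr₀r hx)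
    _ ≤ K * R₂⁻¹ * ((2 * (K + 1))⁻¹ * R₁ * R₂) := by
        gcongr
        exact (mem_ball_iff_norm.1 hx).le.trans (hr₀le.trans (min_le_left _ _))
    _ = K / (K + 1) * (R₁ / 2) := by field_simp
    _ ≤ R₁ / 2 :=
        mul_le_of_le_one_left (by positivity) ((div_le_one (by positivity)).2 (by linarith))
end

section
/- Let [[A,B],[C,D]] be a real symplectic (2d)×(2d) matrix in d×d blocks. Then the complex d×d matrices (A + iC)ᵀ and (B + iD)ᵀ are invertible. -/
/-!
Write `S = [[A, B], [C, D]]`. The symplectic relations say that `Aᵀ C` is symmetric and that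
`Dᵀ A - Bᵀ C = 1`, so the real `2d × d` matrix `[A; C]` has a left inverse. With `Z = A + i C`,
symmetry of `Aᵀ C` kills the imaginary part of `Zᴴ Z`, leaving the Gram matrix `Aᵀ A + Cᵀ C` of
`[A; C]`, which is positive definite because `[A; C]` is injective. Hence `Zᴴ Z`, and with it `Z`,
is invertible. The same argument applies to the columns `[B; D]`.
-/

open Matrix Complex

namespace Matrix

variable {m n : Type*} [Fintype m] [Fintype n] [DecidableEq n]

theorem isUnit_transpose_mul_self_of_mul_eq_one {M : Matrix m n ℝ} {L : Matrix n m ℝ}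
    (h : L * M = 1) : IsUnit (Mᵀ * M) := by
  have hinj : Function.Injective M.mulVec := fun v w hvw => by
    simpa [mulVec_mulVec, h] using congrArg (L *ᵥ ·) hvw
  simpa using (PosDef.conjTranspose_mul_self M hinj).isUnit

theorem conjTranspose_mul_self_map_add_I_smul_map {X Y : Matrix n n ℝ}
    (h : Xᵀ * Y = Yᵀ * X) :
    (X.map ofReal + I • Y.map ofReal)ᴴ * (X.map ofReal + I • Y.map ofReal) =
      (Xᵀ * X + Yᵀ * Y).map ofReal := by
  have hmul (M N : Matrix n n ℝ) : (M * N).map ofReal = M.map ofReal * N.map ofReal :=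
    Matrix.map_mul (f := ofRealHom)
  have hstar (M : Matrix n n ℝ) : (M.map ofReal)ᴴ = Mᵀ.map ofReal := by
    ext i j
    simp
  have hsym : Xᵀ.map ofReal * Y.map ofReal = Yᵀ.map ofReal * X.map ofReal := by
    rw [← hmul, ← hmul, h]
  rw [Matrix.map_add _ ofReal_add, hmul, hmul, conjTranspose_add, conjTranspose_smul, hstar,
    hstar, star_def, conj_I, neg_smul, ← sub_eq_add_neg]
  simp only [sub_mul, mul_add, Matrix.smul_mul, Matrix.mul_smul, smul_smul, I_mul_I, neg_smul,
    one_smul, hsym]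
  abel

theorem isUnit_map_add_I_smul_map {X Y P Q : Matrix n n ℝ} (hsym : Xᵀ * Y = Yᵀ * X)
    (hinv : P * X + Q * Y = 1) : IsUnit (X.map ofReal + I • Y.map ofReal) := by
  have hgram : IsUnit (Xᵀ * X + Yᵀ * Y) := by
    have := isUnit_transpose_mul_self_of_mul_eq_one (M := fromRows X Y) (L := fromCols P Q)
      (by rwa [fromCols_mul_fromRows])
    rwa [transpose_fromRows, fromCols_mul_fromRows] at this
  refine isUnit_of_mul_isUnit_right (x := (X.map ofReal + I • Y.map ofReal)ᴴ) ?_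
  rw [conjTranspose_mul_self_map_add_I_smul_map hsym]
  exact hgram.map (ofRealHom.mapMatrix (m := n))

theorem fromBlocks_symplectic_relations {R : Type*} [CommRing R] {A B C D : Matrix n n R}
    (h : (fromBlocks A B C D)ᵀ * fromBlocks 0 1 (-1) 0 * fromBlocks A B C D =
      fromBlocks 0 1 (-1) 0) :
    Aᵀ * C = Cᵀ * A ∧ Bᵀ * D = Dᵀ * B ∧ Aᵀ * D - Cᵀ * B = 1 := by
  rw [fromBlocks_transpose, fromBlocks_multiply, fromBlocks_multiply, fromBlocks_inj] at h
  simp only [Matrix.mul_zero, Matrix.mul_one, Matrix.mul_neg, zero_add, add_zero,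
    Matrix.neg_mul] at h
  obtain ⟨hAC, hAD, -, hBD⟩ := h
  exact ⟨(neg_add_eq_zero.mp hAC).symm, (neg_add_eq_zero.mp hBD).symm,
    (neg_add_eq_sub _ _).symm.trans hAD⟩

end Matrix

theorem stmt_6 (d : ℕ) (A B C D : Matrix (Fin d) (Fin d) ℝ)
    (h : (Matrix.fromBlocks A B C D)ᵀ * Matrix.fromBlocks 0 1 (-1) 0 *
        Matrix.fromBlocks A B C D = Matrix.fromBlocks 0 1 (-1) 0) :
    IsUnit ((A.map Complex.ofReal + Complex.I • C.map Complex.ofReal)ᵀ) ∧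
    IsUnit ((B.map Complex.ofReal + Complex.I • D.map Complex.ofReal)ᵀ) := by
  obtain ⟨hAC, hBD, hAD⟩ := fromBlocks_symplectic_relations h
  have hDA : Dᵀ * A - Bᵀ * C = 1 := by
    simpa [transpose_sub, transpose_mul] using congrArg transpose hAD
  refine ⟨(isUnit_transpose _).mpr (isUnit_map_add_I_smul_map (P := Dᵀ) (Q := -Bᵀ) hAC ?_),
    (isUnit_transpose _).mpr (isUnit_map_add_I_smul_map (P := -Cᵀ) (Q := Aᵀ) hBD ?_)⟩
  · rwa [neg_mul, ← sub_eq_add_neg]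
  · rwa [neg_mul, neg_add_eq_sub]
end

section
/- Let [[A,B],[C,D]] be a real symplectic matrix in d×d blocks, and let Γ := (B + iD)ᵀ (A + iC)^{−T}. Then Γ is symmetric (Γᵀ = Γ) and its imaginary part Im Γ is positive definite. -/
/-!
Write `P = A + iC` and `Q = B + iD`, so that `Γ = Qᵀ P⁻ᵀ`. The symplectic relations
`A Bᵀ = B Aᵀ`, `C Dᵀ = D Cᵀ`, `A Dᵀ - B Cᵀ = 1` give `Q Pᵀ = P Qᵀ` and `Q Pᴴ - P Qᴴ = 2i`.
The second identity forces `P` to be invertible (if `Pᴴ v = 0` then `2i ‖v‖² = 0`); the first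
then gives `Γ = P⁻¹ Q`, which is symmetric, and `Γ - Γᴴ = P⁻¹ (Q Pᴴ - P Qᴴ) P⁻ᴴ = 2i P⁻¹ P⁻ᴴ`,
so `Im Γ = P⁻¹ P⁻ᴴ` is positive definite.
-/

open Matrix

namespace SymplecticGroup

variable {l R : Type*} [Fintype l] [DecidableEq l] [CommRing R]

theorem mem_iff_transpose_mul_mul {M : Matrix (l ⊕ l) (l ⊕ l) R} :
    M ∈ symplecticGroup l R ↔ Mᵀ * fromBlocks 0 1 (-1) 0 * M = fromBlocks 0 1 (-1) 0 := by
  have hJ : fromBlocks 0 1 (-1) 0 = -J l R := by simp [J, fromBlocks_neg]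
  rw [mem_iff', hJ, Matrix.mul_neg, Matrix.neg_mul, neg_inj]

theorem fromBlocks_mem_iff_mul_transpose {A B C D : Matrix l l R} :
    fromBlocks A B C D ∈ symplecticGroup l R ↔
      A * Bᵀ = B * Aᵀ ∧ C * Dᵀ = D * Cᵀ ∧ A * Dᵀ - B * Cᵀ = 1 := by
  rw [← transpose_mem_iff, fromBlocks_transpose, fromBlocks_mem_iff]
  simp only [transpose_transpose]

variable {A B C D : Matrix l l R}

theorem fromBlocks_mul_transpose_sub_mul_transpose
    (h : fromBlocks A B C D ∈ symplecticGroup l R) : D * Aᵀ - C * Bᵀ = 1 := by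
  simpa [transpose_sub, transpose_mul] using
    congrArg transpose (fromBlocks_mem_iff_mul_transpose.mp h).2.2

theorem fromBlocks_smul_mul_transpose_comm (h : fromBlocks A B C D ∈ symplecticGroup l R)
    (z : R) :
    (B + z • D) * (A + z • C)ᵀ = (A + z • C) * (B + z • D)ᵀ := by
  obtain ⟨h1, h2, h3⟩ := fromBlocks_mem_iff_mul_transpose.mp h
  have h4 := fromBlocks_mul_transpose_sub_mul_transpose h
  simp only [transpose_add, transpose_smul, add_mul, mul_add, smul_mul_assoc, mul_smul_comm]
  linear_combination (norm := module) -h1 + z • h4 - z • h3 - (z * z) • h2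

theorem fromBlocks_smul_mul_transpose_sub (h : fromBlocks A B C D ∈ symplecticGroup l R)
    (z : R) :
    (B + z • D) * (A - z • C)ᵀ - (A + z • C) * (B - z • D)ᵀ = (2 * z) • 1 := by
  obtain ⟨h1, h2, h3⟩ := fromBlocks_mem_iff_mul_transpose.mp h
  have h4 := fromBlocks_mul_transpose_sub_mul_transpose h
  simp only [transpose_sub, transpose_smul, add_mul, mul_sub, smul_mul_assoc, mul_smul_comm]
  linear_combination (norm := module) -h1 + z • h4 + z • h3 + (z * z) • h2

end SymplecticGroup

section

variable {n : Type*}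

open Complex
open scoped ComplexOrder

theorem isUnit_det_of_mul_conjTranspose_sub [Fintype n] [DecidableEq n] {𝕜 : Type*} [RCLike 𝕜]
    {P Q : Matrix n n 𝕜} {c : 𝕜} (hc : c ≠ 0) (h : Q * Pᴴ - P * Qᴴ = c • 1) :
    IsUnit P.det := by
  have hPH : Pᴴ.det ≠ 0 := by
    intro hdet
    obtain ⟨v, hv, hPv⟩ := exists_mulVec_eq_zero_iff.mpr hdet
    have hcv : c * (star v ⬝ᵥ v) = 0 := calc
      c * (star v ⬝ᵥ v) = star v ⬝ᵥ ((Q * Pᴴ - P * Qᴴ) *ᵥ v) := by simp [h, smul_mulVec]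
      _ = star v ⬝ᵥ (Q *ᵥ (Pᴴ *ᵥ v)) - star (Pᴴ *ᵥ v) ⬝ᵥ (Qᴴ *ᵥ v) := by
        rw [sub_mulVec, ← mulVec_mulVec, ← mulVec_mulVec, dotProduct_sub, star_mulVec,
          conjTranspose_conjTranspose, dotProduct_mulVec (star v) P]
      _ = 0 := by simp [hPv]
    exact hv (dotProduct_star_self_eq_zero.mp ((mul_eq_zero.mp hcv).resolve_left hc))
  rwa [det_conjTranspose, ne_eq, star_eq_zero, ← ne_eq, ← isUnit_iff_ne_zero] at hPH

theorem transpose_mul_inv_transpose_eq_inv_mul [Fintype n] [DecidableEq n] {R : Type*}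
    [CommRing R] {P Q : Matrix n n R} (hP : IsUnit P.det) (h : Q * Pᵀ = P * Qᵀ) :
    Qᵀ * (Pᵀ)⁻¹ = P⁻¹ * Q := by
  have hPT : IsUnit Pᵀ.det := by rwa [det_transpose]
  calc Qᵀ * (Pᵀ)⁻¹ = P⁻¹ * (P * Qᵀ) * (Pᵀ)⁻¹ := by
        rw [← Matrix.mul_assoc, nonsing_inv_mul _ hP, Matrix.one_mul]
    _ = P⁻¹ * Q := by
        rw [← h, Matrix.mul_assoc, Matrix.mul_assoc, mul_nonsing_inv _ hPT, Matrix.mul_one]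

theorem inv_mul_sub_conjTranspose [Fintype n] [DecidableEq n] {K : Type*} [Field K] [StarRing K]
    {P Q : Matrix n n K} (hP : IsUnit P.det) :
    P⁻¹ * Q - (P⁻¹ * Q)ᴴ = P⁻¹ * (Q * Pᴴ - P * Qᴴ) * P⁻¹ᴴ := by
  have hPH : Pᴴ * P⁻¹ᴴ = 1 := by
    rw [← conjTranspose_mul, nonsing_inv_mul _ hP, conjTranspose_one]
  rw [conjTranspose_mul, Matrix.mul_sub, Matrix.sub_mul, ← Matrix.mul_assoc P⁻¹ P,
    nonsing_inv_mul _ hP, Matrix.one_mul, Matrix.mul_assoc, Matrix.mul_assoc, hPH, Matrix.mul_one]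

theorem conjTranspose_map_ofReal_add_I_smul (A C : Matrix n n ℝ) :
    (A.map ofReal + I • C.map ofReal)ᴴ = (A.map ofReal - I • C.map ofReal)ᵀ := by
  ext i j
  simp [sub_eq_add_neg]

theorem map_im_map_ofReal {Γ H : Matrix n n ℂ} (hΓ : Γᵀ = Γ) (h : Γ - Γᴴ = (2 * I) • H) :
    (Γ.map im).map ofReal = H := by
  ext i j
  have hij := congrFun₂ h i j
  rw [Matrix.sub_apply, conjTranspose_apply, ← transpose_apply Γ i j, hΓ, star_def, sub_conj,
    Matrix.smul_apply, smul_eq_mul] at hij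
  apply mul_left_cancel₀ (show 2 * I ≠ 0 by simp)
  rw [← hij, map_apply, map_apply]
  push_cast
  ring

theorem posDef_of_posDef_map_ofReal [Fintype n] {X : Matrix n n ℝ} (h : (X.map ofReal).PosDef) :
    X.PosDef := by
  refine .of_dotProduct_mulVec_pos ?_ fun x hx ↦ ?_
  · ext i j
    simpa using congrFun₂ h.isHermitian i j
  · have hxc : ofReal ∘ x ≠ 0 := fun h0 ↦ hx (funext fun i ↦ by simpa using congrFun h0 i)
    have hcast : ((star x ⬝ᵥ (X *ᵥ x) : ℝ) : ℂ) =
        star (ofReal ∘ x) ⬝ᵥ (X.map ofReal *ᵥ (ofReal ∘ x)) := by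
      simp [dotProduct, mulVec]
    exact zero_lt_real.mp (hcast ▸ h.dotProduct_mulVec_pos hxc)

theorem posDef_map_im_of_sub_conjTranspose [Fintype n] [DecidableEq n] {Γ R : Matrix n n ℂ}
    (hR : IsUnit R.det) (hΓ : Γᵀ = Γ) (h : Γ - Γᴴ = (2 * I) • (R * Rᴴ)) :
    (Γ.map im).PosDef := by
  apply posDef_of_posDef_map_ofReal
  rw [map_im_map_ofReal hΓ h]
  exact .mul_conjTranspose_self R <|
    vecMul_injective_iff_isUnit.mpr ((isUnit_iff_isUnit_det R).mpr hR)

end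

theorem stmt_7 (d : ℕ) (A B C D : Matrix (Fin d) (Fin d) ℝ)
    (h : (Matrix.fromBlocks A B C D)ᵀ * Matrix.fromBlocks 0 1 (-1) 0 *
        Matrix.fromBlocks A B C D = Matrix.fromBlocks 0 1 (-1) 0) :
    let Γ : Matrix (Fin d) (Fin d) ℂ :=
      (B.map Complex.ofReal + Complex.I • D.map Complex.ofReal)ᵀ *
        ((A.map Complex.ofReal + Complex.I • C.map Complex.ofReal)ᵀ)⁻¹
    Γᵀ = Γ ∧ (Matrix.of fun i j => (Γ i j).im).PosDef := by
  intro Γ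
  set P := A.map Complex.ofReal + Complex.I • C.map Complex.ofReal
  set Q := B.map Complex.ofReal + Complex.I • D.map Complex.ofReal
  have hM := SymplecticGroup.map_mem (SymplecticGroup.mem_iff_transpose_mul_mul.mpr h)
    Complex.ofRealHom
  rw [fromBlocks_map] at hM
  have hQP : Q * Pᵀ = P * Qᵀ := SymplecticGroup.fromBlocks_smul_mul_transpose_comm hM Complex.I
  have hQPH : Q * Pᴴ - P * Qᴴ = (2 * Complex.I) • 1 := by
    rw [conjTranspose_map_ofReal_add_I_smul, conjTranspose_map_ofReal_add_I_smul]
    exact SymplecticGroup.fromBlocks_smul_mul_transpose_sub hM Complex.I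
  have hP : IsUnit P.det := isUnit_det_of_mul_conjTranspose_sub (by simp) hQPH
  have hΓ : Γ = P⁻¹ * Q := transpose_mul_inv_transpose_eq_inv_mul hP hQP
  have hΓT : Γᵀ = Γ := calc
    Γᵀ = P⁻¹ * Q := by
      rw [transpose_mul, transpose_nonsing_inv, transpose_transpose, transpose_transpose]
    _ = Γ := hΓ.symm
  refine ⟨hΓT, posDef_map_im_of_sub_conjTranspose (isUnit_nonsing_inv_det P hP) hΓT ?_⟩
  rw [hΓ, inv_mul_sub_conjTranspose hP, hQPH, Matrix.mul_smul, Matrix.mul_one, Matrix.smul_mul]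
end

section
/- Let [[A,B],[C,D]] be a real symplectic matrix in d×d blocks with B invertible, let Γ := (B+iD)ᵀ(A+iC)^{−T}, and define Ỹ := Aᵀ + Dᵀ + i(Cᵀ − Bᵀ). Then Γ + iI is invertible and (Γ + iI)⁻¹ = (1/i)(A + iC)ᵀ Ỹ⁻¹. -/
/-!
Put `W := A + iC`. Since `iỸ = (B + iD)ᵀ + iWᵀ`, we get `Γ + iI = iỸ(Wᵀ)⁻¹`, so everything reduces
to the invertibility of `W` and `Ỹ`. Both are Gram-matrix arguments: a square matrix whose Gram
matrix equals the Gram matrix of a left-invertible matrix is injective. The symplectic relations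
give `WᴴW = AᵀA + CᵀC`, where `(A; C)` has the left inverse `(Dᵀ, -Bᵀ)`, and
`ỸᴴỸ = Z̃ᴴZ̃ + 4I`.
-/

open Matrix

namespace Matrix

section Gram

variable {m n K : Type*} [Fintype m] [Fintype n] [DecidableEq n] [Field K] [PartialOrder K]
  [StarRing K] [StarOrderedRing K]

theorem isUnit_of_conjTranspose_mul_self_eq {W : Matrix n n K} {S : Matrix m n K}
    {L : Matrix n m K} (hW : Wᴴ * W = Sᴴ * S) (hL : L * S = 1) : IsUnit W := by
  rw [isUnit_iff_isUnit_det, isUnit_iff_ne_zero, Ne, ← exists_mulVec_eq_zero_iff]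
  rintro ⟨v, hv, hWv⟩
  have hSv : S *ᵥ v = 0 := by
    rw [← conjTranspose_mul_self_mulVec_eq_zero, ← hW, ← mulVec_mulVec, hWv, mulVec_zero]
  exact hv (by rw [← one_mulVec v, ← hL, ← mulVec_mulVec, hSv, mulVec_zero])

theorem isUnit_of_conjTranspose_mul_self_eq_add {W S T X Y : Matrix n n K}
    (hW : Wᴴ * W = Sᴴ * S + Tᴴ * T) (hXY : X * S + Y * T = 1) : IsUnit W :=
  isUnit_of_conjTranspose_mul_self_eq (S := fromRows S T) (L := fromCols X Y)
    (by rw [conjTranspose_fromRows_eq_fromCols_conjTranspose, fromCols_mul_fromRows, hW])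
    (by rw [fromCols_mul_fromRows, hXY])

end Gram

theorem conjTranspose_eq_transpose_of_map_star {m n α : Type*} [Star α] {A : Matrix m n α}
    (hA : A.map star = A) : Aᴴ = Aᵀ :=
  congrArg transpose hA

theorem isUnit_mul_inv_add_smul_one_and_inv_eq {n K : Type*} [Fintype n] [DecidableEq n]
    [Field K] {P W Y : Matrix n n K} {z : K} (hz : z ≠ 0) (hW : IsUnit W) (hY : IsUnit Y)
    (hPWY : P + z • W = z • Y) :
    IsUnit (P * W⁻¹ + z • 1) ∧ (P * W⁻¹ + z • 1)⁻¹ = z⁻¹ • (W * Y⁻¹) := by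
  have hWdet := (isUnit_iff_isUnit_det W).1 hW
  have hYdet := (isUnit_iff_isUnit_det Y).1 hY
  have hfactor : P * W⁻¹ + z • 1 = z • (Y * W⁻¹) := by
    rw [← smul_mul_assoc, ← hPWY, Matrix.add_mul, smul_mul_assoc, mul_nonsing_inv _ hWdet]
  have hinv : (P * W⁻¹ + z • 1) * (z⁻¹ • (W * Y⁻¹)) = 1 := by
    rw [hfactor, smul_mul_smul_comm, mul_inv_cancel₀ hz, one_smul, Matrix.mul_assoc,
      nonsing_inv_mul_cancel_left _ _ hWdet, mul_nonsing_inv _ hYdet]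
  exact ⟨(isUnit_iff_isUnit_det _).2 (isUnit_det_of_right_inverse hinv), inv_eq_right_inv hinv⟩

end Matrix

namespace SymplecticGroup

theorem mem_iff_transpose_mul_fromBlocks_mul {l R : Type*} [DecidableEq l] [Fintype l]
    [CommRing R] {M : Matrix (l ⊕ l) (l ⊕ l) R} :
    M ∈ symplecticGroup l R ↔ Mᵀ * fromBlocks 0 1 (-1) 0 * M = fromBlocks 0 1 (-1) 0 := by
  have hJ : (fromBlocks 0 1 (-1) 0 : Matrix (l ⊕ l) (l ⊕ l) R) = -J l R := by
    simp [J, fromBlocks_neg]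
  rw [mem_iff', hJ, Matrix.mul_neg, Matrix.neg_mul, neg_inj]

open Complex
open scoped ComplexOrder

variable {n : Type*} [Fintype n] [DecidableEq n] {a b c e : Matrix n n ℂ}

theorem isUnit_add_I_smul_of_fromBlocks_mem
    (hM : fromBlocks a b c e ∈ symplecticGroup n ℂ) (ha : a.map star = a) (hc : c.map star = c) :
    IsUnit (a + I • c) := by
  obtain ⟨hac, -, hae⟩ := fromBlocks_mem_iff.1 hM
  have hea : eᵀ * a - bᵀ * c = 1 := by simpa using congr(transpose $hae)
  refine isUnit_of_conjTranspose_mul_self_eq_add (X := eᵀ) (Y := -bᵀ) ?_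
    (by rw [Matrix.neg_mul, ← sub_eq_add_neg, hea])
  simp only [conjTranspose_add, conjTranspose_smul, conjTranspose_eq_transpose_of_map_star ha,
    conjTranspose_eq_transpose_of_map_star hc, star_def, conj_I, Matrix.add_mul, Matrix.mul_add,
    smul_mul_assoc, mul_smul_comm, hac]
  match_scalars <;> grind [I_sq]

theorem isUnit_transpose_add_transpose_add_I_smul_of_fromBlocks_mem
    (hM : fromBlocks a b c e ∈ symplecticGroup n ℂ) (ha : a.map star = a) (hb : b.map star = b)
    (hc : c.map star = c) (he : e.map star = e) :
    IsUnit (aᵀ + eᵀ + I • (cᵀ - bᵀ)) := by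
  obtain ⟨hab, hce, hae⟩ := fromBlocks_mem_iff.1
    (by simpa [fromBlocks_transpose] using transpose_mem hM)
  simp only [transpose_transpose] at hab hce hae
  have hea : e * aᵀ - c * bᵀ = 1 := by simpa using congr(transpose $hae)
  refine isUnit_of_conjTranspose_mul_self_eq_add (S := aᵀ - eᵀ + I • (cᵀ + bᵀ))
    (T := (2 : ℂ) • 1) (X := 0) (Y := (2⁻¹ : ℂ) • 1) ?_ (by simp)
  simp only [conjTranspose_add, conjTranspose_sub, conjTranspose_smul, transpose_conjTranspose,
    ha, hb, hc, he, conjTranspose_one]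
  simp only [star_def, conj_I, map_ofNat]
  simp only [Matrix.add_mul, Matrix.mul_add, Matrix.sub_mul, Matrix.mul_sub, smul_mul_assoc,
    mul_smul_comm, smul_smul, Matrix.mul_one, eq_add_of_sub_eq hae, eq_add_of_sub_eq hea, hab, hce]
  match_scalars <;> grind [I_sq]

end SymplecticGroup

theorem stmt_8_general (d : ℕ) (A B C D : Matrix (Fin d) (Fin d) ℝ)
    (h : (Matrix.fromBlocks A B C D)ᵀ * Matrix.fromBlocks 0 1 (-1) 0 *
        Matrix.fromBlocks A B C D = Matrix.fromBlocks 0 1 (-1) 0) :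
    let Γ : Matrix (Fin d) (Fin d) ℂ :=
      (B.map Complex.ofReal + Complex.I • D.map Complex.ofReal)ᵀ *
        ((A.map Complex.ofReal + Complex.I • C.map Complex.ofReal)ᵀ)⁻¹
    let Ytil : Matrix (Fin d) (Fin d) ℂ :=
      (A.map Complex.ofReal)ᵀ + (D.map Complex.ofReal)ᵀ +
        Complex.I • ((C.map Complex.ofReal)ᵀ - (B.map Complex.ofReal)ᵀ)
    IsUnit (Γ + Complex.I • (1 : Matrix (Fin d) (Fin d) ℂ)) ∧
    (Γ + Complex.I • (1 : Matrix (Fin d) (Fin d) ℂ))⁻¹ =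
      Complex.I⁻¹ • ((A.map Complex.ofReal + Complex.I • C.map Complex.ofReal)ᵀ * Ytil⁻¹) := by
  intro Γ Ytil
  have hM : fromBlocks (A.map Complex.ofReal) (B.map Complex.ofReal) (C.map Complex.ofReal)
      (D.map Complex.ofReal) ∈ symplecticGroup (Fin d) ℂ := by
    have := SymplecticGroup.map_mem
      (SymplecticGroup.mem_iff_transpose_mul_fromBlocks_mul.2 h) Complex.ofRealHom
    rwa [fromBlocks_map] at this
  have hreal (X : Matrix (Fin d) (Fin d) ℝ) :
      (X.map Complex.ofReal).map star = X.map Complex.ofReal := by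
    ext; simp
  have hW := SymplecticGroup.isUnit_add_I_smul_of_fromBlocks_mem hM (hreal A) (hreal C)
  have hY := SymplecticGroup.isUnit_transpose_add_transpose_add_I_smul_of_fromBlocks_mem hM
    (hreal A) (hreal B) (hreal C) (hreal D)
  refine isUnit_mul_inv_add_smul_one_and_inv_eq Complex.I_ne_zero ((isUnit_transpose _).2 hW) hY ?_
  simp only [Ytil, transpose_add, transpose_smul, smul_add, smul_smul, Complex.I_mul_I,
    neg_smul, one_smul]
  abel

theorem stmt_8 (d : ℕ) (A B C D : Matrix (Fin d) (Fin d) ℝ)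
    (h : (Matrix.fromBlocks A B C D)ᵀ * Matrix.fromBlocks 0 1 (-1) 0 *
        Matrix.fromBlocks A B C D = Matrix.fromBlocks 0 1 (-1) 0)
    (hB : IsUnit B) :
    let Γ : Matrix (Fin d) (Fin d) ℂ :=
      (B.map Complex.ofReal + Complex.I • D.map Complex.ofReal)ᵀ *
        ((A.map Complex.ofReal + Complex.I • C.map Complex.ofReal)ᵀ)⁻¹
    let Ytil : Matrix (Fin d) (Fin d) ℂ :=
      (A.map Complex.ofReal)ᵀ + (D.map Complex.ofReal)ᵀ +
        Complex.I • ((C.map Complex.ofReal)ᵀ - (B.map Complex.ofReal)ᵀ)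
    IsUnit (Γ + Complex.I • (1 : Matrix (Fin d) (Fin d) ℂ)) ∧
    (Γ + Complex.I • (1 : Matrix (Fin d) (Fin d) ℂ))⁻¹ =
      Complex.I⁻¹ • ((A.map Complex.ofReal + Complex.I • C.map Complex.ofReal)ᵀ * Ytil⁻¹) :=
  stmt_8_general d A B C D h
end

section
/- Consider the (2d)×(2d) complex block matrix E = [[(A+iC)ᵀA + I, (A+iC)ᵀB], [(B+iD)ᵀA − iI, (B+iD)ᵀB]], where [[A,B],[C,D]] is a real symplectic matrix in d×d blocks. Then det E = det(−M)·det(B), where M := C − B − i(A + D). -/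
/-! Writing `P = A + iC` and `Q = B + iD`, the matrix `E` factors as
`[[1, Pᵀ], [-i, Qᵀ]] * [[1, 0], [A, B]]`. Both factors have an identity block in the top-left
corner, so their determinants are the Schur complements `det (Qᵀ + i Pᵀ)` and `det B`, and
`Qᵀ + i Pᵀ = (-M)ᵀ`. -/

open Matrix

namespace Matrix

variable {m n R : Type*} [Fintype m] [Fintype n] [DecidableEq m] [CommRing R]

theorem fromBlocks_one_mul_fromBlocks_one_zero (P : Matrix m n R) (N : Matrix n m R)
    (Q : Matrix n n R) (A : Matrix n m R) (B : Matrix n n R) :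
    fromBlocks 1 P N Q * fromBlocks 1 0 A B =
      fromBlocks (P * A + 1) (P * B) (Q * A + N) (Q * B) := by
  simp [fromBlocks_multiply, add_comm]

theorem det_fromBlocks_mul_add_one [DecidableEq n] (P : Matrix m n R) (N : Matrix n m R)
    (Q : Matrix n n R) (A : Matrix n m R) (B : Matrix n n R) :
    (fromBlocks (P * A + 1) (P * B) (Q * A + N) (Q * B)).det = (Q - N * P).det * B.det := by
  rw [← fromBlocks_one_mul_fromBlocks_one_zero, det_mul, det_fromBlocks_one₁₁,
    det_fromBlocks_one₁₁, Matrix.mul_zero, sub_zero]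

end Matrix

theorem stmt_9_general (d : ℕ) (A B C D : Matrix (Fin d) (Fin d) ℝ) :
    let A' : Matrix (Fin d) (Fin d) ℂ := A.map Complex.ofReal
    let B' : Matrix (Fin d) (Fin d) ℂ := B.map Complex.ofReal
    let C' : Matrix (Fin d) (Fin d) ℂ := C.map Complex.ofReal
    let D' : Matrix (Fin d) (Fin d) ℂ := D.map Complex.ofReal
    let E : Matrix (Fin d ⊕ Fin d) (Fin d ⊕ Fin d) ℂ :=
      Matrix.fromBlocks ((A' + Complex.I • C')ᵀ * A' + 1) ((A' + Complex.I • C')ᵀ * B')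
        ((B' + Complex.I • D')ᵀ * A' - Complex.I • 1) ((B' + Complex.I • D')ᵀ * B')
    let M : Matrix (Fin d) (Fin d) ℂ := C' - B' - Complex.I • (A' + D')
    E.det = (-M).det * B'.det := by
  intro A' B' C' D' E M
  have hSchur : (B' + Complex.I • D')ᵀ - -(Complex.I • 1) * (A' + Complex.I • C')ᵀ = (-M)ᵀ := by
    simp only [M, neg_mul, smul_mul, one_mul, sub_neg_eq_add, ← transpose_smul, ← transpose_add,
      transpose_inj, smul_add, smul_smul, Complex.I_mul_I, neg_one_smul]
    abel
  rw [← det_transpose (-M), ← hSchur, ← det_fromBlocks_mul_add_one, ← sub_eq_add_neg]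

theorem stmt_9 (d : ℕ) (A B C D : Matrix (Fin d) (Fin d) ℝ)
    (h : (Matrix.fromBlocks A B C D)ᵀ * Matrix.fromBlocks 0 1 (-1) 0 *
        Matrix.fromBlocks A B C D = Matrix.fromBlocks 0 1 (-1) 0) :
    let A' : Matrix (Fin d) (Fin d) ℂ := A.map Complex.ofReal
    let B' : Matrix (Fin d) (Fin d) ℂ := B.map Complex.ofReal
    let C' : Matrix (Fin d) (Fin d) ℂ := C.map Complex.ofReal
    let D' : Matrix (Fin d) (Fin d) ℂ := D.map Complex.ofReal
    let E : Matrix (Fin d ⊕ Fin d) (Fin d ⊕ Fin d) ℂ :=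
      Matrix.fromBlocks ((A' + Complex.I • C')ᵀ * A' + 1) ((A' + Complex.I • C')ᵀ * B')
        ((B' + Complex.I • D')ᵀ * A' - Complex.I • 1) ((B' + Complex.I • D')ᵀ * B')
    let M : Matrix (Fin d) (Fin d) ℂ := C' - B' - Complex.I • (A' + D')
    E.det = (-M).det * B'.det :=
  stmt_9_general d A B C D
end
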